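/- In a connected weighted graph G, every vertex u with d^ω(u,x₀) ≤ d^ω(u,x₁) is connected to x₀ by a path lying entirely inside V₀ = {w : d^ω(w,x₀) ≤ d^ω(w,x₁)}; in particular x₀ ∈ V₀. -/
import Mathlib

open SimpleGraph

/-- The weight of a walk: the sum of the weights of its edges. -/
noncomputable def walkWeight {V : Type} (w : V → V → ℝ) {G : SimpleGraph V}
    {u v : V} (p : G.Walk u v) : ℝ :=
  (p.darts.map fun d => w d.toProd.1 d.toProd.2).sum

/-- The shortest-path (minimum-weight walk) distance. -/
noncomputable def dw {V : Type} (w : V → V → ℝ) (G : SimpleGraph V) (u v : V) : ℝ :=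
  sInf {x | ∃ p : G.Walk u v, walkWeight w p = x}

section Aux

variable {V : Type} {G : SimpleGraph V} (w : V → V → ℝ)

lemma walkWeight_cons {u v x : V} (h : G.Adj u v) (p : G.Walk v x) :
    walkWeight w (Walk.cons h p) = w u v + walkWeight w p := by
  simp [walkWeight]

lemma walkWeight_append {u v x : V} (p : G.Walk u v) (q : G.Walk v x) :
    walkWeight w (p.append q) = walkWeight w p + walkWeight w q := by
  simp [walkWeight, Walk.darts_append]

lemma walkWeight_nonneg (hpos : ∀ u v, G.Adj u v → 0 < w u v) {u v : V} (p : G.Walk u v) :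
    0 ≤ walkWeight w p := by
  apply List.sum_nonneg
  intro x hx
  obtain ⟨d, _, rfl⟩ := List.mem_map.mp hx
  exact (hpos _ _ d.adj).le

lemma walkWeight_dropUntil_le [DecidableEq V] (hpos : ∀ u v, G.Adj u v → 0 < w u v)
    {u v : V} (p : G.Walk u v) (x : V) (hx : x ∈ p.support) :
    walkWeight w (p.dropUntil x hx) ≤ walkWeight w p := by
  conv_rhs => rw [← p.take_spec hx]
  rw [walkWeight_append]
  have := walkWeight_nonneg w hpos (p.takeUntil x hx)
  linarith

lemma walkWeight_bypass_le [DecidableEq V] (hpos : ∀ u v, G.Adj u v → 0 < w u v)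
    {u v : V} (p : G.Walk u v) :
    walkWeight w p.bypass ≤ walkWeight w p := by
  induction p with
  | nil => simp [Walk.bypass]
  | @cons a b c h p ih =>
    have hb : (Walk.cons h p).bypass =
        if hs : a ∈ p.bypass.support then p.bypass.dropUntil a hs
        else Walk.cons h p.bypass := rfl
    rw [hb]
    split_ifs with hs
    · calc walkWeight w (p.bypass.dropUntil a hs) ≤ walkWeight w p.bypass :=
            walkWeight_dropUntil_le w hpos _ _ hs
        _ ≤ walkWeight w p := ih
        _ ≤ walkWeight w (Walk.cons h p) := by
            rw [walkWeight_cons]; have := (hpos _ _ h).le; linarith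
    · rw [walkWeight_cons, walkWeight_cons]; linarith

lemma dw_bddBelow (hpos : ∀ u v, G.Adj u v → 0 < w u v) (u v : V) :
    BddBelow {x | ∃ p : G.Walk u v, walkWeight w p = x} := by
  refine ⟨0, ?_⟩
  rintro x ⟨p, rfl⟩
  exact walkWeight_nonneg w hpos p

/-- The infimum defining `dw` is attained by some walk. -/
lemma exists_min_walk [Fintype V] (hpos : ∀ u v, G.Adj u v → 0 < w u v)
    (hconn : G.Connected) (u v : V) :
    ∃ p : G.Walk u v, walkWeight w p = dw w G u v := by
  classical
  obtain ⟨q⟩ := hconn.preconnected u v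
  have hne : (Finset.univ.image fun p : G.Path u v => walkWeight w p.val).Nonempty :=
    ⟨walkWeight w q.toPath.val, Finset.mem_image.mpr ⟨q.toPath, Finset.mem_univ _, rfl⟩⟩
  obtain ⟨m, hm, hmin⟩ := Finset.exists_min_image _ (fun x => x) hne
  obtain ⟨p₀, _, rfl⟩ := Finset.mem_image.mp hm
  refine ⟨p₀.val, ?_⟩
  have hlb : ∀ x ∈ {x | ∃ p : G.Walk u v, walkWeight w p = x}, walkWeight w p₀.val ≤ x := by
    rintro x ⟨p, rfl⟩
    calc walkWeight w p₀.val ≤ walkWeight w p.toPath.val :=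
          hmin _ (Finset.mem_image.mpr ⟨p.toPath, Finset.mem_univ _, rfl⟩)
      _ ≤ walkWeight w p := walkWeight_bypass_le w hpos p
  exact le_antisymm (le_csInf ⟨_, p₀.val, rfl⟩ hlb)
    (csInf_le (dw_bddBelow w hpos u v) ⟨p₀.val, rfl⟩)

lemma dw_le (hpos : ∀ u v, G.Adj u v → 0 < w u v) {u v : V} (p : G.Walk u v) :
    dw w G u v ≤ walkWeight w p :=
  csInf_le (dw_bddBelow w hpos u v) ⟨p, rfl⟩

lemma dw_triangle_walk [Fintype V] (hpos : ∀ u v, G.Adj u v → 0 < w u v)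
    (hconn : G.Connected) {u z : V} (x : V) (p : G.Walk u z) :
    dw w G u x ≤ walkWeight w p + dw w G z x := by
  obtain ⟨q, hq⟩ := exists_min_walk w hpos hconn z x
  calc dw w G u x ≤ walkWeight w (p.append q) := dw_le w hpos _
    _ = walkWeight w p + dw w G z x := by rw [walkWeight_append, hq]

end Aux

/-- Every label-0 vertex is connected to x₀ by a walk lying inside the label-0
class V₀; in particular x₀ itself is in V₀. -/
theorem stmt_4 {V : Type} [Fintype V] (G : SimpleGraph V) (w : V → V → ℝ)
    (hsymm : ∀ u v, w u v = w v u) (hpos : ∀ u v, G.Adj u v → 0 < w u v)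
    (hconn : G.Connected) (x₀ x₁ : V) :
    (∀ u : V, dw w G u x₀ ≤ dw w G u x₁ →
      ∃ p : G.Walk u x₀, ∀ z ∈ p.support, dw w G z x₀ ≤ dw w G z x₁) ∧
    dw w G x₀ x₀ ≤ dw w G x₀ x₁ := by
  classical
  constructor
  · intro u hu
    obtain ⟨p, hp⟩ := exists_min_walk w hpos hconn u x₀
    refine ⟨p, fun z hz => ?_⟩
    have hsplit : walkWeight w (p.takeUntil z hz) + walkWeight w (p.dropUntil z hz)
        = dw w G u x₀ := by rw [← walkWeight_append, p.take_spec hz, hp]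
    have h1 : dw w G z x₀ ≤ walkWeight w (p.dropUntil z hz) := dw_le w hpos _
    have h2 : dw w G u x₁ ≤ walkWeight w (p.takeUntil z hz) + dw w G z x₁ :=
      dw_triangle_walk w hpos hconn x₁ _
    linarith
  · have h0 : dw w G x₀ x₀ = 0 := by
      apply le_antisymm
      · simpa [walkWeight] using dw_le w hpos (Walk.nil : G.Walk x₀ x₀)
      · exact le_csInf ⟨0, Walk.nil, by simp [walkWeight]⟩
          (by rintro x ⟨p, rfl⟩; exact walkWeight_nonneg w hpos p)
    obtain ⟨q, hq⟩ := exists_min_walk w hpos hconn x₀ x₁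
    rw [h0, ← hq]
    exact walkWeight_nonneg w hpos q
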